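/- Optimization bound used in the probability estimate: let d ≥ 2 be a natural number, a > 0 a real, and let x₁, x₂ be real numbers satisfying (d−1)x₁² + x₂² = a²d². Then (d−1)(a + x₁)² + ((d−1)a + x₂)² ≤ a²(2√((d−1)d³) + d(2d−1)). -/

import Mathlib

/-!
Expanding the squares and substituting the constraint, the left-hand side equals
`a²d(2d-1) + 2a(d-1)(x₁+x₂)`. The linear term is bounded by the weighted Cauchy–Schwarz
inequality `((d-1)(x₁+x₂))² ≤ (d-1)d · ((d-1)x₁² + x₂²) = a²(d-1)d³`.
-/

open Real

theorem abs_mul_add_le_sqrt {c : ℝ} (hc : 0 ≤ c) (x y : ℝ) :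
    |c * (x + y)| ≤ √(c * (c + 1) * (c * x ^ 2 + y ^ 2)) := by
  apply Real.abs_le_sqrt
  have defect : c * (c + 1) * (c * x ^ 2 + y ^ 2) - (c * (x + y)) ^ 2 = c * (y - c * x) ^ 2 := by
    ring
  linarith [mul_nonneg hc (sq_nonneg (y - c * x))]

theorem perturbation_maximization_bound (d : ℕ) (hd : 2 ≤ d) (a : ℝ)
    (x₁ x₂ : ℝ) (h : ((d : ℝ) - 1) * x₁ ^ 2 + x₂ ^ 2 = a ^ 2 * (d : ℝ) ^ 2) :
    ((d : ℝ) - 1) * (a + x₁) ^ 2 + (((d : ℝ) - 1) * a + x₂) ^ 2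
      ≤ a ^ 2 * (2 * Real.sqrt (((d : ℝ) - 1) * (d : ℝ) ^ 3) +
          (d : ℝ) * (2 * (d : ℝ) - 1)) := by
  have hc : (0 : ℝ) ≤ d - 1 := by
    have : (2 : ℝ) ≤ d := by exact_mod_cast hd
    linarith
  have cauchy_schwarz : |(d - 1) * (x₁ + x₂)| ≤ |a| * √((d - 1) * (d : ℝ) ^ 3) := by
    have := abs_mul_add_le_sqrt hc x₁ x₂
    rwa [h, show ((d : ℝ) - 1) * (d - 1 + 1) * (a ^ 2 * d ^ 2) = a ^ 2 * ((d - 1) * d ^ 3) by ring,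
      sqrt_mul (sq_nonneg a), sqrt_sq_eq_abs] at this
  have linear_term : a * ((d - 1) * (x₁ + x₂)) ≤ a ^ 2 * √((d - 1) * (d : ℝ) ^ 3) :=
    calc a * ((d - 1) * (x₁ + x₂)) ≤ |a| * |(d - 1) * (x₁ + x₂)| := by
          rw [← abs_mul]; exact le_abs_self _
      _ ≤ |a| * (|a| * √((d - 1) * (d : ℝ) ^ 3)) := by gcongr
      _ = a ^ 2 * √((d - 1) * (d : ℝ) ^ 3) := by rw [← mul_assoc, ← sq, sq_abs]
  linear_combination h + 2 * linear_term
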